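/- arXiv:1806.09286 — 5 statements merged into one kernel-verified Lean document; each statement's English description precedes it below -/
import Mathlib

section
/- Let κ be an infinite cardinal and let 𝒰 be a uniform ultrafilter over κ. If Ch(𝒰) = μ, then cf(μ) > ω. Consequently, the ultrafilter number 𝔲_κ has uncountable cofinality for every infinite cardinal κ. -/
/-!
Suppose `Ch(U) = μ` is infinite but `cf μ = ω`, so that a base of size `μ` is the union of an
increasing sequence of families `F n`, each of size `< μ`. No family of size `< μ` is a base, so
one can shrink recursively `a 0 = univ`, `a (n + 1) = a n ∩ d n` with `d n ∈ U` such that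
`b ∩ a n ⊄ a (n + 1)` for every `b ∈ F n`. Every point leaves the decreasing sequence `a` at
most once; sorting the points by the parity of that step, one of the two classes `P` lies in `U`
and satisfies `P ∩ a n ⊆ a (n + 1)` for infinitely many `n`. Since the `F n` increase, no base
element fits inside `P`, a contradiction. For `𝔲_κ`, apply this to a uniform ultrafilter whose
characteristic realises `𝔲_κ`.
-/

open Cardinal

/-- A base for an ultrafilter `U`: a collection of members of `U` such that every
member of `U` contains some element of the collection. -/
def IsUltraBase {α : Type*} (U : Ultrafilter α) (B : Set (Set α)) : Prop :=
  (∀ b ∈ B, b ∈ U) ∧ ∀ A ∈ U, ∃ b ∈ B, b ⊆ A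

/-- The characteristic `Ch(U)` of an ultrafilter: the minimal cardinality of a base. -/
noncomputable def ultraCh {α : Type*} (U : Ultrafilter α) : Cardinal :=
  sInf {c : Cardinal | ∃ B : Set (Set α), IsUltraBase U B ∧ #↥B = c}

/-- The ultrafilter number `𝔲_κ` (for `κ = #α`): the minimal size of a base for some
uniform ultrafilter over `α`. -/
noncomputable def uNumber (α : Type*) : Cardinal :=
  sInf {c : Cardinal | ∃ U : Ultrafilter α, (∀ A ∈ U, #↥A = #α) ∧
    ∃ B : Set (Set α), IsUltraBase U B ∧ #↥B = c}

open Set Filter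

theorem Cardinal.mk_Iic_toType_ord_lt {c : Cardinal} (hc : ℵ₀ ≤ c) (x : c.ord.ToType) :
    #(Iic x) < c := by
  rw [← Iio_insert]
  have hIio : #(Iio x) < c := by simpa using Cardinal.mk_Iio_lt x
  exact mk_insert_le.trans_lt (add_lt_of_lt hc hIio (one_lt_aleph0.trans_le hc))

theorem exists_monotone_iUnion_eq_univ_of_cof_le_aleph0 {β : Type*} (hβ : ℵ₀ ≤ #β)
    (hcof : (#β).ord.cof ≤ ℵ₀) :
    ∃ F : ℕ → Set β, Monotone F ∧ (∀ n, #(F n) < #β) ∧ ⋃ n, F n = Set.univ := by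
  obtain ⟨e⟩ : Nonempty (β ≃ (#β).ord.ToType) := Cardinal.eq.1 (by simp)
  obtain ⟨S, hS, hScard⟩ := Order.exists_cof_eq (#β).ord.ToType
  have hScount : S.Countable := by
    rw [← le_aleph0_iff_set_countable, hScard, Ordinal.cof_toType]
    exact hcof
  have : Nonempty β := (aleph0_le_mk_iff.1 hβ).nonempty
  have : Nonempty (#β).ord.ToType := e.symm.nonempty
  obtain ⟨s, rfl⟩ := hScount.exists_eq_range (hS.nonempty)
  refine ⟨fun n => e ⁻¹' Iic (partialSups s n),
    fun m n hmn => preimage_mono (Iic_subset_Iic.2 ((partialSups s).monotone hmn)),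
    fun n => (mk_preimage_equiv e _).trans_lt (mk_Iic_toType_ord_lt hβ _), ?_⟩
  refine eq_univ_of_forall fun y => ?_
  obtain ⟨_, ⟨k, rfl⟩, hk⟩ := hS (e y)
  exact mem_iUnion.2 ⟨k, hk.trans (le_partialSups s k)⟩

theorem Antitone.eq_of_mem_sdiff_succ {α : Type*} {a : ℕ → Set α} (ha : Antitone a) {x : α}
    {k m : ℕ} (hk : x ∈ a k \ a (k + 1)) (hm : x ∈ a m \ a (m + 1)) : k = m := by
  by_contra hne
  rcases Nat.lt_or_gt_of_ne hne with h | h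
  · exact hk.2 (ha h hm.1)
  · exact hm.2 (ha h hk.1)

theorem Antitone.exists_mem_frequently_inter_subset_succ {α : Type*} {a : ℕ → Set α}
    (ha : Antitone a) (U : Ultrafilter α) :
    ∃ P ∈ U, ∃ᶠ m in atTop, P ∩ a m ⊆ a (m + 1) := by
  set P := {x | ∀ k, Even k → x ∈ a k → x ∈ a (k + 1)}
  rcases U.mem_or_compl_mem P with hP | hP
  · exact ⟨P, hP, frequently_atTop.2 fun n =>
      ⟨2 * n, by omega, fun x hx => hx.1 _ (even_two_mul n) hx.2⟩⟩
  · refine ⟨Pᶜ, hP, frequently_atTop.2 fun n => ⟨2 * n + 1, by omega, ?_⟩⟩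
    rintro x ⟨hxP, hx⟩
    by_contra hx'
    obtain ⟨k, hk, hxk, hxk'⟩ : ∃ k, Even k ∧ x ∈ a k ∧ x ∉ a (k + 1) := by
      simpa [P] using hxP
    have := ha.eq_of_mem_sdiff_succ ⟨hxk, hxk'⟩ ⟨hx, hx'⟩
    subst this
    exact Nat.not_even_two_mul_add_one n hk

theorem not_subset_of_frequently_inter_subset_succ {α : Type*} {F : ℕ → Set (Set α)}
    (hF : Monotone F) {a : ℕ → Set α} (ha : ∀ m, ∀ b ∈ F m, ¬ b ∩ a m ⊆ a (m + 1))
    {P : Set α} (hP : ∃ᶠ m in atTop, P ∩ a m ⊆ a (m + 1)) {n : ℕ} {b : Set α} (hb : b ∈ F n) :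
    ¬ b ⊆ P := by
  intro hbP
  obtain ⟨m, hnm, hm⟩ := frequently_atTop.1 hP n
  exact ha m b (hF hnm hb) ((inter_subset_inter_left _ hbP).trans hm)

namespace Ultrafilter

variable {α : Type*} {U : Ultrafilter α}

theorem exists_isUltraBase_mk_eq_ultraCh (U : Ultrafilter α) :
    ∃ B : Set (Set α), IsUltraBase U B ∧ #B = ultraCh U :=
  csInf_mem (s := {c | ∃ B : Set (Set α), IsUltraBase U B ∧ #B = c})
    ⟨_, {A | A ∈ U}, ⟨fun _ hb => hb, fun A hA => ⟨A, hA, subset_rfl⟩⟩, rfl⟩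

theorem ultraCh_le_mk {B : Set (Set α)} (hB : IsUltraBase U B) : ultraCh U ≤ #B :=
  csInf_le (OrderBot.bddBelow _) ⟨B, hB, rfl⟩

theorem exists_mem_forall_not_subset {D : Set (Set α)} (hD : ∀ d ∈ D, d ∈ U)
    (hcard : #D < ultraCh U) : ∃ A ∈ U, ∀ d ∈ D, ¬ d ⊆ A := by
  by_contra! h
  exact (ultraCh_le_mk ⟨hD, h⟩).not_gt hcard

theorem exists_mem_forall_not_inter_subset {D : Set (Set α)} (hD : ∀ d ∈ D, d ∈ U)
    (hcard : #D < ultraCh U) {s : Set α} (hs : s ∈ U) : ∃ A ∈ U, ∀ d ∈ D, ¬ d ∩ s ⊆ A := by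
  obtain ⟨A, hA, hAD⟩ := exists_mem_forall_not_subset (D := (· ∩ s) '' D)
    (by rintro _ ⟨d, hd, rfl⟩; exact inter_mem (hD d hd) hs) (mk_image_le.trans_lt hcard)
  exact ⟨A, hA, fun d hd => hAD _ (mem_image_of_mem _ hd)⟩

theorem not_isUltraBase_iUnion {F : ℕ → Set (Set α)} (hF : Monotone F)
    (hcard : ∀ n, #(F n) < ultraCh U) : ¬ IsUltraBase U (⋃ n, F n) := by
  intro hB
  have hFU : ∀ n, ∀ f ∈ F n, f ∈ U := fun n f hf => hB.1 f (mem_iUnion.2 ⟨n, hf⟩)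
  choose! d hdU hd using fun n s (hs : s ∈ U) =>
    exists_mem_forall_not_inter_subset (hFU n) (hcard n) hs
  let a : ℕ → Set α := fun n => Nat.rec univ (fun m s => s ∩ d m s) n
  have haU : ∀ n, a n ∈ U := fun n => Nat.rec univ_mem (fun m h => inter_mem h (hdU m _ h)) n
  have ha : ∀ m, ∀ b ∈ F m, ¬ b ∩ a m ⊆ a (m + 1) := fun m b hb h =>
    hd m (a m) (haU m) b hb (h.trans inter_subset_right)
  have ha_anti : Antitone a := antitone_nat_of_succ_le fun m => inter_subset_left
  obtain ⟨P, hP, hPa⟩ := ha_anti.exists_mem_frequently_inter_subset_succ U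
  obtain ⟨b, hb, hbP⟩ := hB.2 P hP
  obtain ⟨n, hbn⟩ := mem_iUnion.1 hb
  exact not_subset_of_frequently_inter_subset_succ hF ha hPa hbn hbP

theorem aleph0_lt_cof_ord_ultraCh (hU : ℵ₀ ≤ ultraCh U) : ℵ₀ < (ultraCh U).ord.cof := by
  by_contra! hcof
  obtain ⟨B, hB, hBcard⟩ := U.exists_isUltraBase_mk_eq_ultraCh
  rw [← hBcard] at hU hcof
  obtain ⟨F, hF, hFcard, hFB⟩ := exists_monotone_iUnion_eq_univ_of_cof_le_aleph0 hU hcof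
  refine not_isUltraBase_iUnion (F := fun n => Subtype.val '' F n)
    (fun m n hmn => image_mono (hF hmn)) (fun n => hBcard ▸ mk_image_le.trans_lt (hFcard n)) ?_
  rwa [← image_iUnion, hFB, image_univ, Subtype.range_coe]

theorem aleph0_le_ultraCh (hU : ∀ s ∈ U, s.Infinite) : ℵ₀ ≤ ultraCh U := by
  by_contra! hfin
  obtain ⟨B, hB, hBcard⟩ := U.exists_isUltraBase_mk_eq_ultraCh
  have hBU : ⋂₀ B ∈ U :=
    (sInter_mem (lt_aleph0_iff_set_finite.1 (hBcard ▸ hfin))).2 hB.1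
  obtain ⟨x, hx⟩ := (hU _ hBU).nonempty
  have hxU : {x}ᶜ ∈ U := U.compl_mem_iff_notMem.2 fun h => hU _ h (finite_singleton x)
  obtain ⟨b, hbB, hb⟩ := hB.2 _ hxU
  exact hb (hx b hbB) rfl

end Ultrafilter

theorem exists_uniform_ultrafilter {α : Type*} (hα : ℵ₀ ≤ #α) :
    ∃ U : Ultrafilter α, ∀ A ∈ U, #A = #α := by
  let L : Filter α := comk (fun s => #s < #α) (by simpa using aleph0_pos.trans_le hα)
    (fun _ ht _ hs => (mk_le_mk_of_subset hs).trans_lt ht)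
    (fun _ hs _ ht => (mk_union_le _ _).trans_lt (add_lt_of_lt hα hs ht))
  have : L.NeBot := ⟨fun h => by simpa [L] using (h ▸ mem_bot : ∅ ∈ L)⟩
  refine ⟨Ultrafilter.of L, fun A hA => (mk_set_le A).antisymm (not_lt.1 fun hlt => ?_)⟩
  exact (Ultrafilter.of L).compl_notMem_iff.2 hA (Ultrafilter.of_le L (by simpa [L] using hlt))

theorem exists_uniform_ultraCh_eq_uNumber {α : Type*} (hα : ℵ₀ ≤ #α) :
    ∃ U : Ultrafilter α, (∀ A ∈ U, #A = #α) ∧ ultraCh U = uNumber α := by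
  obtain ⟨U₀, hU₀⟩ := exists_uniform_ultrafilter hα
  obtain ⟨B₀, hB₀, -⟩ := U₀.exists_isUltraBase_mk_eq_ultraCh
  obtain ⟨U, hU, B, hB, hBcard⟩ := csInf_mem (s := {c | ∃ U : Ultrafilter α,
    (∀ A ∈ U, #A = #α) ∧ ∃ B : Set (Set α), IsUltraBase U B ∧ #B = c}) ⟨_, U₀, hU₀, B₀, hB₀, rfl⟩
  refine ⟨U, hU, ((Ultrafilter.ultraCh_le_mk hB).trans_eq hBcard).antisymm ?_⟩
  obtain ⟨B', hB', hB'card⟩ := U.exists_isUltraBase_mk_eq_ultraCh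
  exact csInf_le (OrderBot.bddBelow _) ⟨U, hU, B', hB', hB'card⟩

theorem aleph0_lt_cof_ord_ultraCh_of_uniform {α : Type*} (hα : ℵ₀ ≤ #α) {U : Ultrafilter α}
    (hU : ∀ A ∈ U, #A = #α) : ℵ₀ < (ultraCh U).ord.cof :=
  Ultrafilter.aleph0_lt_cof_ord_ultraCh <| Ultrafilter.aleph0_le_ultraCh fun s hs =>
    infinite_coe_iff.1 (infinite_iff.2 ((hU s hs).symm ▸ hα))

/-- For an infinite cardinal `κ = #α` and a uniform ultrafilter `U` over `κ`,
if `Ch(U) = μ` then `cf(μ) > ω`; consequently `𝔲_κ` has uncountable cofinality. -/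
theorem stmt1 {α : Type*} (hα : ℵ₀ ≤ #α) :
    (∀ U : Ultrafilter α, (∀ A ∈ U, #↥A = #α) →
      ∀ μ : Cardinal, ultraCh U = μ → ℵ₀ < μ.ord.cof) ∧
    ℵ₀ < (uNumber α).ord.cof := by
  refine ⟨fun U hU μ hμ => hμ ▸ aleph0_lt_cof_ord_ultraCh_of_uniform hα hU, ?_⟩
  obtain ⟨U, hU, hUu⟩ := exists_uniform_ultraCh_eq_uNumber hα
  exact hUu ▸ aleph0_lt_cof_ord_ultraCh_of_uniform hα hU
end

section
/- Let κ be a measurable cardinal and let 𝒰 be a κ-complete uniform ultrafilter over κ. If Ch(𝒰) = μ, then cf(μ) > κ. -/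
open Cardinal

/-- An ultrafilter is `κ`-complete iff it is closed under intersections of fewer
than `κ` of its members. -/
def UltraComplete {α : Type*} (κ : Cardinal) (U : Ultrafilter α) : Prop :=
  ∀ S : Set (Set α), #↥S < κ → (∀ s ∈ S, s ∈ U) → ⋂₀ S ∈ U

/-!
Countable completeness makes the ordering of functions `α → κ` modulo `U` well-founded, so there
is a least function `f` that is unbounded modulo `U`. A function pressed down below `f` is bounded,
hence (by `κ`-completeness) constant on a set in `U`; consequently `U` is closed under diagonal
intersections `{x | ∀ γ < f x, x ∈ A γ}`.

If `cf μ ≤ κ`, a base `B` of size `μ` is a union of pieces `B γ` (`γ < κ`) of size `< μ`. Cutting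
the members of `B γ` down to `{x | γ < f x}` does not give a base, so some `A γ ∈ U` contains none
of them. The diagonal intersection of the `A γ` is in `U` but contains no member of `B`.
-/

open Filter Set

universe u

namespace UltraComplete

variable {α : Type u} {κ : Cardinal.{u}} {U : Ultrafilter α}

theorem countableInterFilter (hc : UltraComplete κ U) (hκ : ℵ₀ < κ) :
    CountableInterFilter (U : Filter α) where
  countable_sInter_mem S hS := hc S (hS.le_aleph0.trans_lt hκ)

theorem exists_mem_of_iUnion_mem (hc : UltraComplete κ U) {J : Type u} (s : J → Set α)
    (hJ : #J < κ) (hs : ⋃ j, s j ∈ U) : ∃ j, s j ∈ U := by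
  by_contra! hnot
  have hcompl : ⋂₀ range (fun j => (s j)ᶜ) ∈ U :=
    hc _ (mk_range_le.trans_lt hJ) (forall_mem_range.2 fun j => U.compl_mem_iff_notMem.2 (hnot j))
  rw [sInter_range, ← compl_iUnion] at hcompl
  exact U.compl_mem_iff_notMem.1 hcompl hs

end UltraComplete

theorem ultraCh_le_card {α : Type*} {U : Ultrafilter α} {B : Set (Set α)} (hB : IsUltraBase U B) :
    ultraCh U ≤ #B :=
  csInf_le' ⟨B, hB, rfl⟩

theorem exists_isUltraBase_card_eq_ultraCh {α : Type*} (U : Ultrafilter α) :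
    ∃ B, IsUltraBase U B ∧ #B = ultraCh U :=
  csInf_mem (s := {c | ∃ B : Set (Set α), IsUltraBase U B ∧ #B = c})
    ⟨_, {A | A ∈ U}, ⟨fun _ hb => hb, fun A hA => ⟨A, hA, subset_rfl⟩⟩, rfl⟩

theorem exists_mem_forall_not_subset_of_card_lt_ultraCh {α : Type*} {U : Ultrafilter α}
    {C : Set (Set α)} (hC : ∀ c ∈ C, c ∈ U) (hCU : #C < ultraCh U) :
    ∃ A ∈ U, ∀ c ∈ C, ¬ c ⊆ A := by
  by_contra! hbase
  exact (ultraCh_le_card ⟨hC, hbase⟩).not_gt hCU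

theorem IsUltraBase.le_card {α : Type u} {κ : Cardinal.{u}} {U : Ultrafilter α} {B : Set (Set α)}
    (hB : IsUltraBase U B) (hc : UltraComplete κ U) (hsmall : ∀ s : Set α, #s < κ → s ∉ U)
    (hκ : 1 < κ) : κ ≤ #B := by
  by_contra! hB_lt
  obtain ⟨x, hx⟩ := U.nonempty_of_mem (hc B hB_lt hB.1)
  have hxc : ({x}ᶜ : Set α) ∈ U :=
    U.compl_mem_iff_notMem.2 (hsmall _ (by rwa [mk_singleton]))
  obtain ⟨b, hbB, hbx⟩ := hB.2 _ hxc
  exact hbx (hx b hbB) rfl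

theorem exists_iUnion_eq_card_lt_of_cof_le {X K : Type u} [Nonempty K] (s : Set X)
    (hs : ℵ₀ ≤ #s) (hK : (#s).ord.cof ≤ #K) :
    ∃ P : K → Set X, ⋃ γ, P γ = s ∧ ∀ γ, #(P γ) < #s := by
  obtain ⟨e⟩ : Nonempty (s ≃ (#s).ord.ToType) := Cardinal.eq.1 (mk_ord_toType _).symm
  obtain ⟨S, hS, hScard⟩ := Order.exists_cof_eq (#s).ord.ToType
  rw [Ordinal.cof_toType] at hScard
  obtain ⟨ι⟩ : Nonempty (S ↪ K) := (le_def _ _).1 (hScard ▸ hK)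
  have : Nonempty s := mk_ne_zero_iff.1 (aleph0_pos.trans_le hs).ne'
  have : Nonempty S := by
    obtain ⟨t, ht, -⟩ := hS (e (Classical.arbitrary s))
    exact ⟨⟨t, ht⟩⟩
  let c : K → S := Function.invFun ι
  refine ⟨fun γ => (↑) '' (e ⁻¹' Iic (c γ)), ?_, fun γ => ?_⟩
  · refine Subset.antisymm (iUnion_subset fun γ => Subtype.coe_image_subset _ _) fun x hx => ?_
    obtain ⟨t, ht, hxt⟩ := hS (e ⟨x, hx⟩)
    refine mem_iUnion.2 ⟨ι ⟨t, ht⟩, ⟨x, hx⟩, ?_, rfl⟩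
    simpa [c, Function.leftInverse_invFun ι.injective _] using hxt
  · calc #((↑) '' (e ⁻¹' Iic (c γ : (#s).ord.ToType)) : Set X)
        ≤ #(e ⁻¹' Iic (c γ : (#s).ord.ToType)) := mk_image_le
      _ = #(Iic (c γ : (#s).ord.ToType)) := mk_preimage_equiv _ _
      _ < #(#s).ord.ToType := mk_Iic_lt _ (by simp) (by simpa)
      _ = #s := mk_ord_toType _

def IsLeastUnbounded {α K : Type*} [Preorder K] (l : Filter α) (f : α → K) : Prop :=
  Tendsto f l atTop ∧ ∀ g : α → K, (∀ᶠ x in l, g x < f x) → ¬ Tendsto g l atTop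

theorem wellFounded_eventually_lt {α K : Type*} [Preorder K] [WellFoundedLT K] {l : Filter α}
    [l.NeBot] [CountableInterFilter l] : WellFounded fun g f : α → K => ∀ᶠ x in l, g x < f x := by
  refine wellFounded_iff_isEmpty_descending_chain.2 ⟨fun ⟨F, hF⟩ => ?_⟩
  obtain ⟨x, hx⟩ := (eventually_countable_forall.2 hF).exists
  obtain ⟨n, hn⟩ := WellFounded.not_rel_apply_succ (r := (· < ·)) fun n => F n x
  exact hn (hx n)

theorem exists_isLeastUnbounded {α K : Type*} [Preorder K] [WellFoundedLT K] {l : Filter α}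
    [l.NeBot] [CountableInterFilter l] {f₀ : α → K} (hf₀ : Tendsto f₀ l atTop) :
    ∃ f : α → K, IsLeastUnbounded l f := by
  obtain ⟨f, hf, hmin⟩ :=
    (wellFounded_eventually_lt (l := l)).has_min {f | Tendsto f l atTop} ⟨f₀, hf₀⟩
  exact ⟨f, hf, fun g hgf hg => hmin g hg hgf⟩

section LeastUnbounded

variable {α K : Type u} [LinearOrder K] {κ : Cardinal.{u}} {U : Ultrafilter α}

theorem tendsto_atTop_of_injective (hsmall : ∀ s : Set α, #s < κ → s ∉ U)
    (hK : ∀ γ : K, #(Iio γ) < κ) {e : α → K} (he : e.Injective) : Tendsto e U atTop := by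
  refine tendsto_atTop.2 fun γ => (U.eventually_not.2 ?_).mono fun _ => le_of_not_gt
  exact hsmall (e ⁻¹' Iio γ) ((mk_preimage_of_injective e _ he).trans_lt (hK γ))

namespace IsLeastUnbounded

variable {f : α → K}

theorem exists_eventually_eq (hf : IsLeastUnbounded (U : Filter α) f) (hc : UltraComplete κ U)
    (hK : ∀ γ : K, #(Iio γ) < κ) {g : α → K} (hg : ∀ᶠ x in U, g x < f x) :
    ∃ δ, ∀ᶠ x in U, g x = δ := by
  obtain ⟨γ, hγ⟩ := not_forall.1 (mt tendsto_atTop.2 (hf.2 g hg))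
  have hbdd : ∀ᶠ x in U, g x < γ := (U.eventually_not.2 hγ).mono fun x => lt_of_not_ge
  have hunion : {x | g x < γ} = ⋃ δ : Iio γ, {x | g x = δ} := by
    ext x; simp
  rw [Filter.Eventually, hunion] at hbdd
  obtain ⟨⟨δ, _⟩, hδ⟩ := hc.exists_mem_of_iUnion_mem _ (hK γ) hbdd
  exact ⟨δ, hδ⟩

theorem diagInter_mem (hf : IsLeastUnbounded (U : Filter α) f) (hc : UltraComplete κ U)
    (hK : ∀ γ : K, #(Iio γ) < κ) (A : K → Set α) (hA : ∀ γ, A γ ∈ U) :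
    {x | ∀ γ < f x, x ∈ A γ} ∈ U := by
  set D := {x | ∀ γ < f x, x ∈ A γ}
  by_contra hD
  have hwit : ∀ x, ∃ γ, x ∉ D → γ < f x ∧ x ∉ A γ := by
    intro x
    by_cases hx : x ∈ D
    · exact ⟨f x, absurd hx⟩
    · obtain ⟨γ, hγ, hxA⟩ : ∃ γ < f x, x ∉ A γ := by simpa [D] using hx
      exact ⟨γ, fun _ => ⟨hγ, hxA⟩⟩
  choose g hg using hwit
  have hout : ∀ᶠ x in U, x ∉ D := U.compl_mem_iff_notMem.2 hD
  obtain ⟨δ, hδ⟩ := hf.exists_eventually_eq hc hK (hout.mono fun x hx => (hg x hx).1)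
  obtain ⟨x, hx, hgx, hxA⟩ := (hout.and (hδ.and (hA δ))).exists
  exact (hg x hx).2 (hgx ▸ hxA)

theorem not_isUltraBase_iUnion [NoMaxOrder K] (hf : IsLeastUnbounded (U : Filter α) f)
    (hc : UltraComplete κ U) (hK : ∀ γ : K, #(Iio γ) < κ) (P : K → Set (Set α))
    (hP : ∀ γ, #(P γ) < ultraCh U) : ¬ IsUltraBase U (⋃ γ, P γ) := by
  intro hB
  have hpiece : ∀ γ, ∃ A ∈ U, ∀ b ∈ P γ, ¬ b ∩ {x | γ < f x} ⊆ A := by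
    intro γ
    obtain ⟨A, hA, hAC⟩ := exists_mem_forall_not_subset_of_card_lt_ultraCh
      (C := (· ∩ {x | γ < f x}) '' P γ)
      (forall_mem_image.2 fun b hb =>
        inter_mem (hB.1 b (mem_iUnion_of_mem γ hb)) (hf.1.eventually_gt_atTop γ))
      (mk_image_le.trans_lt (hP γ))
    exact ⟨A, hA, fun b hb => hAC _ (mem_image_of_mem _ hb)⟩
  choose A hA hAP using hpiece
  obtain ⟨b, hbP, hbA⟩ := hB.2 _ (hf.diagInter_mem hc hK A hA)
  obtain ⟨γ, hγ⟩ := mem_iUnion.1 hbP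
  exact hAP γ b hγ fun x hx => hbA hx.1 γ hx.2

end IsLeastUnbounded

end LeastUnbounded

/-- If `κ` is a measurable cardinal (uncountable, carrying a `κ`-complete uniform
ultrafilter) and `U` is a `κ`-complete uniform ultrafilter over `κ` with
`Ch(U) = μ`, then `cf(μ) > κ`. -/
theorem stmt2 {α : Type*} (κ : Cardinal) (hκ : #α = κ) (huncount : ℵ₀ < κ)
    (U : Ultrafilter α)
    (hcomplete : UltraComplete κ U)
    (huniform : ∀ A ∈ U, #↥A = κ)
    (μ : Cardinal) (h : ultraCh U = μ) :
    κ < μ.ord.cof := by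
  have hsmall : ∀ s : Set α, #s < κ → s ∉ U := fun s hs hsU => hs.ne (huniform s hsU)
  have := hcomplete.countableInterFilter huncount
  have := Cardinal.noMaxOrder huncount.le
  have : Nonempty κ.ord.ToType := mk_ne_zero_iff.1 (by simpa using (aleph0_pos.trans huncount).ne')
  have hK : ∀ γ : κ.ord.ToType, #(Iio γ) < κ := fun γ => by simpa using mk_Iio_lt γ
  obtain ⟨B, hB, hBμ⟩ := exists_isUltraBase_card_eq_ultraCh U
  rw [h] at hBμ
  have hκμ : κ ≤ μ := hBμ ▸ hB.le_card hcomplete hsmall (one_lt_aleph0.trans huncount)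
  by_contra! hcof
  obtain ⟨e⟩ : Nonempty (α ≃ κ.ord.ToType) := Cardinal.eq.1 (by rw [hκ, mk_ord_toType])
  obtain ⟨f, hf⟩ := exists_isLeastUnbounded (tendsto_atTop_of_injective hsmall hK e.injective)
  obtain ⟨P, hPB, hP⟩ := exists_iUnion_eq_card_lt_of_cof_le (K := κ.ord.ToType) B
    (hBμ ▸ huncount.le.trans hκμ) (by rwa [hBμ, mk_ord_toType])
  exact hf.not_isUltraBase_iUnion hcomplete hK P (fun γ => h ▸ hBμ ▸ hP γ) (hPB ▸ hB)
end

section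
/- Let μ be a singular cardinal with cf(μ) = θ. Then 𝔡*_μ = 𝔡_μ, where 𝔡*_μ is the minimal cardinality of a family 𝓖 ⊆ θ^μ (functions from μ to θ) such that every f : μ → θ satisfies f <* g for some g ∈ 𝓖, with f <* g meaning |{β < μ : f(β) ≥ g(β)}| < μ. -/
open Cardinal

/-- `f ≤* g` in `μ^μ`: the set of counterexamples to domination has size `< μ`.
Here `μ` is represented by its canonical well-ordered type `μ.ord.ToType`. -/
def AlmostLE (μ : Cardinal) (f g : μ.ord.ToType → μ.ord.ToType) : Prop :=
  #↥{β : μ.ord.ToType | g β < f β} < μ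

/-- The dominating number `𝔡_μ`: the minimal size of a family `D ⊆ μ^μ` such that
every `f ∈ μ^μ` is `≤*`-dominated by a member of `D`. -/
noncomputable def dNumber (μ : Cardinal) : Cardinal :=
  sInf {c : Cardinal | ∃ D : Set (μ.ord.ToType → μ.ord.ToType),
    (∀ f : μ.ord.ToType → μ.ord.ToType, ∃ g ∈ D, AlmostLE μ f g) ∧ #↥D = c}

/-- `f <* g` for `f, g : μ → θ`: all but fewer than `μ` many `β < μ` satisfy
`f(β) < g(β)`. -/
def AlmostLT (μ θ : Cardinal) (f g : μ.ord.ToType → θ.ord.ToType) : Prop :=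
  #↥{β : μ.ord.ToType | g β ≤ f β} < μ

/-- `𝔡*_μ`: the minimal cardinality of a family `G` of functions from `μ` to `θ`
(`θ = cf(μ)`) such that every `f : μ → θ` satisfies `f <* g` for some `g ∈ G`. -/
noncomputable def dStarNumber (μ θ : Cardinal) : Cardinal :=
  sInf {c : Cardinal | ∃ G : Set (μ.ord.ToType → θ.ord.ToType),
    (∀ f : μ.ord.ToType → θ.ord.ToType, ∃ g ∈ G, AlmostLT μ θ f g) ∧ #↥G = c}

/-!
A monotone map `E : cf(μ) → μ` with unbounded range, together with a choice of
`c : μ → cf(μ)` satisfying `x < E (c x)`, translates families back and forth: composing with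
`c` turns a `≤*`-dominating family in `μ^μ` into a `<*`-dominating family in `θ^μ` of no larger
size, and composing with `E` does the converse. Hence the two infima coincide.
-/

theorem exists_monotone_unbounded_ord_cof_toType {α : Type*} [LinearOrder α] [WellFoundedLT α]
    [NoMaxOrder α] : ∃ E : (Order.cof α).ord.ToType → α, Monotone E ∧ ∀ x, ∃ i, x < E i := by
  obtain ⟨s, hs, hs_type⟩ := Ordinal.exists_ord_cof_eq α
  obtain ⟨e⟩ := Ordinal.type_eq.1 (hs_type.trans (Ordinal.type_toType _).symm)
  let e' := OrderIso.ofRelIsoLT e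
  refine ⟨fun i ↦ (e'.symm i).1, fun i j hij ↦ e'.symm.monotone hij, fun x ↦ ?_⟩
  obtain ⟨y, hxy⟩ := exists_gt x
  obtain ⟨b, hb, hyb⟩ := hs y
  exact ⟨e' ⟨b, hb⟩, by simpa using hxy.trans_le hyb⟩

theorem exists_monotone_unbounded_cof_toType_ord_toType {μ : Cardinal} (hμ : ℵ₀ ≤ μ) :
    ∃ E : μ.ord.cof.ord.ToType → μ.ord.ToType, Monotone E ∧ ∀ x, ∃ i, x < E i := by
  have := Cardinal.noMaxOrder hμ
  rw [← Ordinal.cof_toType]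
  exact exists_monotone_unbounded_ord_cof_toType

section Transfer

variable {μ θ : Cardinal} {E : θ.ord.ToType → μ.ord.ToType} {c : μ.ord.ToType → θ.ord.ToType}

theorem AlmostLE.almostLT_comp (hE : Monotone E) (hc : ∀ x, x < E (c x))
    {f : μ.ord.ToType → θ.ord.ToType} {g : μ.ord.ToType → μ.ord.ToType}
    (h : AlmostLE μ (E ∘ f) g) : AlmostLT μ θ f (c ∘ g) :=
  (mk_le_mk_of_subset fun β (hβ : c (g β) ≤ f β) ↦
    show g β < E (f β) from (hc (g β)).trans_le (hE hβ)).trans_lt h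

theorem AlmostLT.almostLE_comp (hE : Monotone E) (hc : ∀ x, x < E (c x))
    {f : μ.ord.ToType → μ.ord.ToType} {g : μ.ord.ToType → θ.ord.ToType}
    (h : AlmostLT μ θ (c ∘ f) g) : AlmostLE μ f (E ∘ g) :=
  (mk_le_mk_of_subset fun β (hβ : E (g β) < f β) ↦
    show g β ≤ c (f β) from le_of_not_gt fun hlt ↦
      ((hc (f β)).trans_le (hE hlt.le)).not_gt hβ).trans_lt h

end Transfer

theorem stmt13_general (μ θ : Cardinal) (hinf : ℵ₀ ≤ μ)
    (hθ : θ = μ.ord.cof) :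
    dStarNumber μ θ = dNumber μ := by
  subst hθ
  obtain ⟨E, hE, hE_cofinal⟩ := exists_monotone_unbounded_cof_toType_ord_toType hinf
  choose c hc using hE_cofinal
  refine csInf_eq_csInf_of_forall_exists_le ?_ ?_
  · rintro _ ⟨G, hG, rfl⟩
    refine ⟨_, ⟨(E ∘ ·) '' G, fun f ↦ ?_, rfl⟩, mk_image_le⟩
    obtain ⟨g, hgG, hfg⟩ := hG (c ∘ f)
    exact ⟨E ∘ g, Set.mem_image_of_mem _ hgG, hfg.almostLE_comp hE hc⟩
  · rintro _ ⟨D, hD, rfl⟩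
    refine ⟨_, ⟨(c ∘ ·) '' D, fun f ↦ ?_, rfl⟩, mk_image_le⟩
    obtain ⟨g, hgD, hfg⟩ := hD (E ∘ f)
    exact ⟨c ∘ g, Set.mem_image_of_mem _ hgD, hfg.almostLT_comp hE hc⟩

/-- For a singular cardinal `μ` with `cf(μ) = θ`, `𝔡*_μ = 𝔡_μ`. -/
theorem stmt13 (μ θ : Cardinal) (hinf : ℵ₀ ≤ μ) (hsing : μ.ord.cof < μ)
    (hθ : θ = μ.ord.cof) :
    dStarNumber μ θ = dNumber μ :=
  stmt13_general μ θ hinf hθ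
end

section
/- Let λ be a singular cardinal. Then cf(𝔡_λ) > λ. -/
open Cardinal

/-!
Split `λ` into `λ` disjoint blocks of size `λ` via a bijection `λ × λ ≃ λ`. If a dominating
family `D` is the union of `λ` pieces `Q i`, then the `i`-th block restriction of some `Q i` is
again dominating: otherwise, pick for each `i` a function `H i` not dominated by any restriction
of `Q i`, and glue the `H i` blockwise into one `f`; a `g ∈ Q i` dominating `f` would dominate
`H i` on block `i`. Hence some piece has size `≥ 𝔡_λ`. Covering `D` by singletons shows
`λ < 𝔡_λ`; if `cf 𝔡_λ ≤ λ`, a minimal dominating family is the union of `cf 𝔡_λ` pieces of size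
`< 𝔡_λ`, a contradiction.
-/

open Set

universe u

theorem exists_iUnion_eq_univ_mk_lt_of_cof (α : Type u) (h : ℵ₀ ≤ #α) :
    ∃ (ι : Type u) (Q : ι → Set α),
      #ι = (#α).ord.cof ∧ ⋃ i, Q i = Set.univ ∧ ∀ i, #(Q i) < #α := by
  have := noMaxOrder h
  obtain ⟨e⟩ : Nonempty ((#α).ord.ToType ≃ α) := Cardinal.eq.1 (mk_ord_toType _)
  obtain ⟨S, hS, hScard⟩ := Order.exists_cof_eq (#α).ord.ToType
  refine ⟨S, fun x => e '' Iic x.1, by rw [hScard, Ordinal.cof_toType], ?_, fun x => ?_⟩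
  · refine eq_univ_of_forall fun a => mem_iUnion.2 ?_
    obtain ⟨x, hxS, hx⟩ := hS (e.symm a)
    exact ⟨⟨x, hxS⟩, e.symm a, hx, e.apply_symm_apply a⟩
  · obtain ⟨y, hy⟩ := exists_gt x.1
    calc #(e '' Iic x.1) ≤ #(Iic x.1) := mk_image_le
      _ ≤ #(Iio y) := mk_le_mk_of_subset (Iic_subset_Iio.2 hy)
      _ < #α := by simpa using mk_Iio_lt y

section Dominating

def IsDominating (lam : Cardinal) (D : Set (lam.ord.ToType → lam.ord.ToType)) : Prop :=
  ∀ f, ∃ g ∈ D, AlmostLE lam f g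

variable {lam : Cardinal.{u}}

theorem isDominating_univ (h : lam ≠ 0) : IsDominating lam Set.univ :=
  fun f => ⟨f, Set.mem_univ f, by simp [AlmostLE, pos_iff_ne_zero.2 h]⟩

theorem dNumber_le_mk {D : Set (lam.ord.ToType → lam.ord.ToType)} (hD : IsDominating lam D) :
    dNumber lam ≤ #D :=
  csInf_le' ⟨D, hD, rfl⟩

theorem exists_isDominating_mk_eq_dNumber (h : lam ≠ 0) :
    ∃ D, IsDominating lam D ∧ #D = dNumber lam :=
  csInf_mem (s := {c | ∃ D, IsDominating lam D ∧ #D = c})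
    ⟨_, Set.univ, isDominating_univ h, rfl⟩

theorem one_lt_mk_of_isDominating (hinf : ℵ₀ ≤ lam) {D : Set (lam.ord.ToType → lam.ord.ToType)}
    (hD : IsDominating lam D) : 1 < #D := by
  have := noMaxOrder hinf
  by_contra! hle
  obtain ⟨g, hg, -⟩ := hD id
  obtain ⟨g', hg', hlt⟩ := hD fun β => Order.succ (g β)
  obtain rfl : g' = g := mk_le_one_iff_set_subsingleton.1 hle hg' hg
  simp [AlmostLE] at hlt

theorem exists_isDominating_image_comp_of_subset_iUnion {ι : Type*} (j : ι ↪ lam.ord.ToType)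
    (P : lam.ord.ToType × lam.ord.ToType ≃ lam.ord.ToType)
    {D : Set (lam.ord.ToType → lam.ord.ToType)} (hD : IsDominating lam D)
    {Q : ι → Set (lam.ord.ToType → lam.ord.ToType)} (hcover : D ⊆ ⋃ i, Q i) :
    ∃ i, IsDominating lam ((fun g β => g (P (j i, β))) '' Q i) := by
  by_contra! hno
  simp only [IsDominating, not_forall, forall_mem_image, not_exists, not_and] at hno
  choose H hH using hno
  let f : lam.ord.ToType → lam.ord.ToType := fun t =>
    Function.extend j H (fun _ => id) (P.symm t).1 (P.symm t).2
  obtain ⟨g, hgD, hfg⟩ := hD f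
  obtain ⟨i, hgi⟩ := mem_iUnion.1 (hcover hgD)
  refine hH i hgi (lt_of_le_of_lt ?_ hfg)
  have hblock : {β | g (P (j i, β)) < H i β} = (fun β => P (j i, β)) ⁻¹' {t | g t < f t} := by
    ext β
    simp [f, j.injective.extend_apply]
  rw [hblock]
  exact mk_preimage_of_injective _ _ fun a b hab => by simpa using P.injective hab

theorem exists_dNumber_le_mk_of_subset_iUnion (hinf : ℵ₀ ≤ lam) {ι : Type u} (hι : #ι ≤ lam)
    {D : Set (lam.ord.ToType → lam.ord.ToType)} (hD : IsDominating lam D)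
    {Q : ι → Set (lam.ord.ToType → lam.ord.ToType)} (hcover : D ⊆ ⋃ i, Q i) :
    ∃ i, dNumber lam ≤ #(Q i) := by
  obtain ⟨j⟩ : Nonempty (ι ↪ lam.ord.ToType) := by rwa [← le_def, mk_ord_toType]
  obtain ⟨P⟩ : Nonempty (lam.ord.ToType × lam.ord.ToType ≃ lam.ord.ToType) :=
    Cardinal.eq.1 (by simp [mul_eq_self hinf])
  obtain ⟨i, hi⟩ := exists_isDominating_image_comp_of_subset_iUnion j P hD hcover
  exact ⟨i, (dNumber_le_mk hi).trans mk_image_le⟩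

theorem lt_dNumber (hinf : ℵ₀ ≤ lam) : lam < dNumber lam := by
  obtain ⟨D, hD, hDcard⟩ := exists_isDominating_mk_eq_dNumber (aleph0_pos.trans_le hinf).ne'
  by_contra! hle
  obtain ⟨g, hg⟩ := exists_dNumber_le_mk_of_subset_iUnion hinf (hDcard.trans_le hle) hD
    (Q := fun g : D => {g.1}) fun g hg => mem_iUnion.2 ⟨⟨g, hg⟩, rfl⟩
  rw [mk_singleton, ← hDcard] at hg
  exact hg.not_gt (one_lt_mk_of_isDominating hinf hD)

end Dominating

theorem stmt15_general (lam : Cardinal) (hinf : ℵ₀ ≤ lam) :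
    lam < (dNumber lam).ord.cof := by
  obtain ⟨D, hD, hDcard⟩ := exists_isDominating_mk_eq_dNumber (aleph0_pos.trans_le hinf).ne'
  obtain ⟨ι, Q, hι, hQ, hQlt⟩ :=
    exists_iUnion_eq_univ_mk_lt_of_cof D (hDcard ▸ hinf.trans (lt_dNumber hinf).le)
  by_contra! hcof
  have hcover : D ⊆ ⋃ i, Subtype.val '' Q i := by
    rw [← image_iUnion, hQ, image_univ, Subtype.range_coe]
  obtain ⟨i, hi⟩ :=
    exists_dNumber_le_mk_of_subset_iUnion hinf (hι.trans_le (hDcard ▸ hcof)) hD hcover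
  exact (hi.trans mk_image_le).not_gt (hDcard ▸ hQlt i)

/-- For every singular cardinal `λ`, `cf(𝔡_λ) > λ`. -/
theorem stmt15 (lam : Cardinal) (hinf : ℵ₀ ≤ lam) (hsing : lam.ord.cof < lam) :
    lam < (dNumber lam).ord.cof :=
  stmt15_general lam hinf
end

section
/- Assume: λ is a singular cardinal with cf(λ) = θ; (λ_i : i < θ) is an increasing sequence of regular cardinals with θ < λ₀, λ = ⋃_{i<θ} λ_i and 2^{λ_i} = λ_i⁺ for every i < θ; κ is a regular cardinal above λ; there is a sequence (f_α : α < κ) in ∏_{i<θ} λ_i that is increasing and cofinal in ∏_{i<θ} λ_i modulo the ideal of bounded subsets of θ; and there is a sequence (g_α : α < κ) in ∏_{i<θ} λ_i⁺ that is increasing and cofinal in ∏_{i<θ} λ_i⁺ modulo the ideal of bounded subsets of θ. Then 𝔡_λ ≥ κ. -/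
open Cardinal

/-!
Let `D ⊆ λ^λ` with `|D| < κ`. Split `λ` into `θ` blocks `λ_t × λ_t`, and for `y < λ` let
`lev y` be an index with `y < λ_{lev y}`. For `g ∈ D` the pattern `(η, ξ) ↦ lev (g (t, η, ξ))`
on block `t` is one of `θ ^ λ_t = 2 ^ λ_t = λ_t⁺` functions; coding patterns by ordinals below
`λ_t⁺` turns `g` into an element of `∏ λ_t⁺`. As `κ` is regular, a single member `g_α` of the
scale bounds all these codes modulo bounded sets, so on block `t` only the `|g_α t| ≤ λ_t`
patterns coded below `g_α t` matter. List them along `η` and let `f (t, η, ξ) = λ_i`, where `i`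
is the value at `(η, ξ)` of the `η`-th listed pattern. For large `t`, some `η` lists the
pattern of `g`, so `f` exceeds `g` on the whole fibre `{(t, η, ξ) : ξ < λ_t}`; hence `g` fails
to dominate `f` on `λ` points.
-/

open Filter Function Set

universe u

theorem Cardinal.IsRegular.exists_forall_lt {κ : Cardinal.{u}} (hκ : κ.IsRegular) {S : Type u}
    (a : S → κ.ord.ToType) (hS : #S < κ) : ∃ b, ∀ s, a s < b := by
  have : ¬ IsCofinal (range a) := fun h =>
    ((Order.cof_le h).trans mk_range_le).not_gt (by rwa [Ordinal.cof_toType, hκ.cof_ord])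
  simpa [IsCofinal] using this

theorem exists_eventually_lt_of_mk_lt {κ : Cardinal.{u}} (hκ : κ.IsRegular) {ι β : Type*}
    [Preorder β] {l : Filter ι} {g : κ.ord.ToType → ι → β}
    (hg : ∀ α α', α < α' → ∀ᶠ i in l, g α i < g α' i) {S : Type u} (hS : #S < κ)
    {x : S → ι → β} (hx : ∀ s, ∃ α, ∀ᶠ i in l, x s i < g α i) :
    ∃ α, ∀ s, ∀ᶠ i in l, x s i < g α i := by
  choose a ha using hx
  obtain ⟨b, hb⟩ := hκ.exists_forall_lt a hS
  exact ⟨b, fun s => ((ha s).and (hg _ _ (hb s))).mono fun i h => h.1.trans h.2⟩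

/-- A scale: witnesses `tcf (∏ i, b i, l) = κ`. -/
structure IsScale {ι : Type*} {κ : Cardinal.{u}} (l : Filter ι) (b : ι → Ordinal.{u})
    (g : κ.ord.ToType → ι → Ordinal.{u}) : Prop where
  lt_bound : ∀ α i, g α i < b i
  eventually_lt : ∀ α α', α < α' → ∀ᶠ i in l, g α i < g α' i
  exists_eventually_gt : ∀ x : ι → Ordinal, (∀ i, x i < b i) → ∃ α, ∀ᶠ i in l, x i < g α i

theorem exists_injective_ordinal_lt {α : Type u} {o : Ordinal.{u}} (h : #α ≤ o.card) :
    ∃ code : α → Ordinal.{u}, Injective code ∧ ∀ a, code a < o := by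
  rw [← mk_toType] at h
  obtain ⟨j⟩ := h
  exact ⟨fun a => (j a : Ordinal), fun a b hab =>
    j.injective (Ordinal.ToType.mk.symm.injective (Subtype.ext hab)), fun a => (j a).toOrd.2⟩

theorem mk_le_card_of_injective_lt {α : Type u} {o : Ordinal.{u}} {code : α → Ordinal.{u}}
    (hinj : Injective code) (hlt : ∀ a, code a < o) : #α ≤ o.card := by
  rw [← Cardinal.lift_le.{u + 1}, ← mk_Iio_ordinal]
  exact (lift_mk_le_lift_mk_of_injective (f := fun a => (⟨code a, hlt a⟩ : Iio o))
    fun a b h => hinj (congrArg Subtype.val h)).trans_eq (lift_id'.{u, u + 1} _)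

theorem IsScale.exists_mk_le_eventually_mem {κ : Cardinal.{u}} (hκ : κ.IsRegular) {ι : Type*}
    {l : Filter ι} {b : ι → Cardinal.{u}} {g : κ.ord.ToType → ι → Ordinal.{u}}
    (hg : IsScale l (fun i => (Order.succ (b i)).ord) g) {P : ι → Type u}
    (hP : ∀ i, #(P i) ≤ Order.succ (b i)) {S : Type u} (hS : #S < κ) (p : S → ∀ i, P i) :
    ∃ C : ∀ i, Set (P i), (∀ i, #(C i) ≤ b i) ∧ ∀ s, ∀ᶠ i in l, p s i ∈ C i := by
  choose code hinj hlt using fun i =>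
    exists_injective_ordinal_lt (o := (Order.succ (b i)).ord) ((hP i).trans_eq (card_ord _).symm)
  obtain ⟨α, hα⟩ := exists_eventually_lt_of_mk_lt hκ hg.eventually_lt hS
    (x := fun s i => code i (p s i)) fun s => hg.exists_eventually_gt _ fun i => hlt i _
  refine ⟨fun i => {q | code i q < g α i}, fun i => ?_, hα⟩
  calc #{q | code i q < g α i} ≤ (g α i).card :=
        mk_le_card_of_injective_lt ((hinj i).comp Subtype.val_injective) fun q => q.2
    _ ≤ b i := Order.lt_succ_iff.1 (lt_ord.1 (hg.lt_bound α i))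

theorem exists_subset_range_of_mk_le {α β : Type u} [Nonempty β] {s : Set β} (h : #s ≤ #α) :
    ∃ σ : α → β, s ⊆ range σ := by
  obtain ⟨j⟩ := h
  exact ⟨extend j Subtype.val fun _ => Classical.arbitrary β, fun b hb =>
    ⟨j ⟨b, hb⟩, j.injective.extend_apply _ _ _⟩⟩

theorem exists_escaping_fun {ι X Y : Type u} [LT Y] [Nonempty Y] {A : ι → Type u}
    (e : (Σ t, A t × A t) ↪ X) {lev : Y → ι} {mark : ι → Y} (hmark : ∀ y, y < mark (lev y))
    (C : ∀ t, Set (A t × A t → ι)) (hC : ∀ t, #(C t) ≤ #(A t)) :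
    ∃ f : X → Y, ∀ g : X → Y, ∀ t, (fun p => lev (g (e ⟨t, p⟩))) ∈ C t →
      #(A t) ≤ #{x | g x < f x} := by
  choose σ hσ using fun t =>
    have : Nonempty (A t × A t → ι) := ⟨fun _ => t⟩
    exists_subset_range_of_mk_le (hC t)
  refine ⟨extend e (fun p => mark (σ p.1 p.2.1 p.2)) fun _ => Classical.arbitrary Y,
    fun g t hgt => ?_⟩
  obtain ⟨η, hη⟩ := hσ t hgt
  refine mk_le_of_injective (f := fun ξ => ⟨e ⟨t, η, ξ⟩, ?_⟩) fun ξ ξ' h => ?_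
  · simp only [mem_ofPred_eq, e.injective.extend_apply, hη]
    exact hmark _
  · simpa using e.injective (congrArg Subtype.val h)

theorem mk_sigma_prod_self_le {ι : Type u} {A : ι → Type u} {μ : Cardinal.{u}} (hμ : ℵ₀ ≤ μ)
    (hι : #ι ≤ μ) (hA : ∀ i, #(A i) ≤ μ) : #(Σ i, A i × A i) ≤ μ := by
  rw [mk_sigma]
  calc sum (fun i => #(A i × A i)) ≤ sum fun _ : ι => μ := sum_le_sum _ _ fun i => by
        rw [mk_prod, lift_id]
        exact (mul_le_mul' (hA i) (hA i)).trans (mul_eq_self hμ).le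
    _ = #ι * μ := sum_const' _ _
    _ ≤ μ := (mul_le_mul_left hι μ).trans (mul_eq_self hμ).le

theorem mk_prod_self_arrow_le {A ι : Type u} {μ : Cardinal.{u}} (hμ : ℵ₀ ≤ μ) (hA : #A = μ)
    (hι : #ι ≤ μ) : #(A × A → ι) ≤ 2 ^ μ := by
  rw [← power_def, mk_prod, lift_id, hA, mul_eq_self hμ, ← power_self_eq hμ]
  exact power_le_power_right hι

theorem Cardinal.exists_forall_exists_lt_of_eq_iSup {ι : Type u} {c : Cardinal.{u}}
    {a : ι → Cardinal.{u}} (hc : c = ⨆ i, a i) (ha : ∀ i, a i < c) :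
    ∃ mark : ι → c.ord.ToType, ∀ y, ∃ i, y < mark i := by
  refine ⟨fun i => Ordinal.ToType.mk ⟨(a i).ord, ord_lt_ord.2 (ha i)⟩, fun y => ?_⟩
  have hy : (y : Ordinal).card < ⨆ i, a i := hc ▸ lt_ord.1 y.toOrd.2
  obtain ⟨i, hi⟩ := (lt_ciSup_iff' bddAbove_of_small).1 hy
  refine ⟨i, ?_⟩
  rw [← Ordinal.ToType.mk.symm.lt_iff_lt, OrderIso.symm_apply_apply]
  exact lt_ord.2 hi

theorem Monotone.ciSup_le_of_eventually_le {ι α : Type*} [Preorder ι] [IsDirected ι (· ≤ ·)]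
    [Nonempty ι] [ConditionallyCompleteLattice α] {c : ι → α} (hc : Monotone c) {a : α}
    (h : ∀ᶠ i in atTop, c i ≤ a) : ⨆ i, c i ≤ a :=
  ciSup_le fun s =>
    let ⟨_, hst, ht⟩ := ((eventually_ge_atTop s).and h).exists
    (hc hst).trans ht

theorem eventually_atTop_of_forall_gt {ι : Type*} [Preorder ι] [NoMaxOrder ι] {p : ι → Prop}
    (h : ∃ i₀, ∀ i, i₀ < i → p i) : ∀ᶠ i in atTop, p i :=
  let ⟨i₀, hi₀⟩ := h
  (eventually_gt_atTop i₀).mono hi₀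

theorem le_dNumber {μ c : Cardinal} (hμ : μ ≠ 0)
    (h : ∀ D : Set (μ.ord.ToType → μ.ord.ToType), (∀ f, ∃ g ∈ D, AlmostLE μ f g) → c ≤ #D) :
    c ≤ dNumber μ := by
  refine le_csInf ⟨_, univ, fun f => ⟨f, mem_univ f, ?_⟩, rfl⟩ ?_
  · simpa [AlmostLE] using pos_iff_ne_zero.2 hμ
  · rintro _ ⟨D, hD, rfl⟩
    exact h D hD

theorem stmt16_general (lam th kap : Cardinal)
    (lams : th.ord.ToType → Cardinal)
    (hinf : ℵ₀ ≤ lam) (hth : lam.ord.cof = th)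
    (hmono : ∀ i j : th.ord.ToType, i < j → lams i < lams j)
    (hregs : ∀ i, (lams i).IsRegular)
    (hth0 : ∀ i, th < lams i)
    (hsup : lam = ⨆ i, lams i)
    (hgch : ∀ i, (2 : Cardinal) ^ lams i = Order.succ (lams i))
    (hkap : kap.IsRegular)
    (gseq : kap.ord.ToType → th.ord.ToType → Ordinal)
    (hgmem : ∀ α i, gseq α i < (Order.succ (lams i)).ord)
    (hginc : ∀ α β : kap.ord.ToType, α < β →
      ∃ i0, ∀ i, i0 < i → gseq α i < gseq β i)
    (hgcof : ∀ x : th.ord.ToType → Ordinal, (∀ i, x i < (Order.succ (lams i)).ord) →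
      ∃ α, ∃ i0, ∀ i, i0 < i → x i < gseq α i) :
    kap ≤ dNumber lam := by
  have hθ : ℵ₀ ≤ th :=
    hth ▸ Ordinal.aleph0_le_cof_iff.2 (Ordinal.one_lt_cof_iff.2 (isSuccLimit_ord hinf))
  have := noMaxOrder hθ
  have := nonempty_ord_toType (aleph0_pos.trans_le hθ).ne'
  have := nonempty_ord_toType (aleph0_pos.trans_le hinf).ne'
  have hlams : ∀ i, lams i < lam := fun i =>
    let ⟨j, hij⟩ := exists_gt i
    (hmono i j hij).trans_le ((le_ciSup bddAbove_of_small j).trans_eq hsup.symm)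
  have hscale : IsScale atTop (fun i => (Order.succ (lams i)).ord) gseq :=
    ⟨hgmem, fun α β h => eventually_atTop_of_forall_gt (hginc α β h),
      fun x hx => (hgcof x hx).imp fun _ => eventually_atTop_of_forall_gt⟩
  refine le_dNumber (aleph0_pos.trans_le hinf).ne' fun D hD => le_of_not_gt fun hDκ => ?_
  obtain ⟨e⟩ : Nonempty ((Σ t, (lams t).ord.ToType × (lams t).ord.ToType) ↪ lam.ord.ToType) := by
    rw [← Cardinal.le_def, mk_toType, card_ord]
    refine mk_sigma_prod_self_le hinf ?_ fun t => by simpa using (hlams t).le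
    simpa using (hth0 (Classical.arbitrary _)).le.trans (hlams _).le
  obtain ⟨mark, hmark⟩ := exists_forall_exists_lt_of_eq_iSup hsup hlams
  choose lev hlev using hmark
  obtain ⟨C, hC, hDC⟩ := hscale.exists_mk_le_eventually_mem hkap
    (fun t => (mk_prod_self_arrow_le (hregs t).aleph0_le (by simp)
      (by simpa using (hth0 t).le)).trans (hgch t).le) hDκ
    (fun g t p => lev ((g : lam.ord.ToType → lam.ord.ToType) (e ⟨t, p⟩)))
  obtain ⟨f, hf⟩ := exists_escaping_fun e hlev C (by simpa using hC)
  obtain ⟨g, hgD, hfg⟩ := hD f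
  have hlams_mono : Monotone lams := StrictMono.monotone fun i j => hmono i j
  exact hfg.not_ge <| hsup.le.trans <| hlams_mono.ciSup_le_of_eventually_le <|
    (hDC ⟨g, hgD⟩).mono fun t ht => by simpa using hf g t ht

/-- Assume `λ` is singular with `cf(λ) = θ`, `(λ_i : i < θ)` is an increasing sequence
of regular cardinals with `θ < λ_0`, `λ = ⋃_{i<θ} λ_i` and `2^{λ_i} = λ_i⁺`; `κ` is
regular with `λ < κ`; and there are sequences of length `κ` increasing and cofinal in
`∏_{i<θ} λ_i` and in `∏_{i<θ} λ_i⁺` modulo the ideal of bounded subsets of `θ`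
(i.e. `tcf(∏ λ_i, J^bd) = tcf(∏ λ_i⁺, J^bd) = κ`).  Then `𝔡_λ ≥ κ`. -/
theorem stmt16 (lam th kap : Cardinal)
    (lams : th.ord.ToType → Cardinal)
    (hinf : ℵ₀ ≤ lam) (hsing : lam.ord.cof < lam) (hth : lam.ord.cof = th)
    (hmono : ∀ i j : th.ord.ToType, i < j → lams i < lams j)
    (hregs : ∀ i, (lams i).IsRegular)
    (hth0 : ∀ i, th < lams i)
    (hsup : lam = ⨆ i, lams i)
    (hgch : ∀ i, (2 : Cardinal) ^ lams i = Order.succ (lams i))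
    (hkap : kap.IsRegular) (hlk : lam < kap)
    (fseq gseq : kap.ord.ToType → th.ord.ToType → Ordinal)
    (hfmem : ∀ α i, fseq α i < (lams i).ord)
    (hfinc : ∀ α β : kap.ord.ToType, α < β →
      ∃ i0, ∀ i, i0 < i → fseq α i < fseq β i)
    (hfcof : ∀ x : th.ord.ToType → Ordinal, (∀ i, x i < (lams i).ord) →
      ∃ α, ∃ i0, ∀ i, i0 < i → x i < fseq α i)
    (hgmem : ∀ α i, gseq α i < (Order.succ (lams i)).ord)
    (hginc : ∀ α β : kap.ord.ToType, α < β →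
      ∃ i0, ∀ i, i0 < i → gseq α i < gseq β i)
    (hgcof : ∀ x : th.ord.ToType → Ordinal, (∀ i, x i < (Order.succ (lams i)).ord) →
      ∃ α, ∃ i0, ∀ i, i0 < i → x i < gseq α i) :
    kap ≤ dNumber lam :=
  stmt16_general lam th kap lams hinf hth hmono hregs hth0 hsup hgch hkap gseq hgmem hginc hgcof
end
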